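/- arXiv:2212.12622 — 6 statements merged into one kernel-verified Lean document; each statement's English description precedes it below -/
import Mathlib

section
/- Let s > 0 and let N ∈ ℕ with N ≥ e·s and N ≥ 1. Then the Taylor tail of the exponential satisfies ∑_{k=N+1}^{∞} s^k / k! ≤ √(2/(π N)). Consequently, for any probability measure μ on [0,1] with moments m_k, the truncation error of its characteristic function satisfies |∫₀¹ exp(isx) dμ(x) − ∑_{k=0}^{N} (is)^k m_k / k!| ≤ √(2/(π N)). -/
/-!
For `0 ≤ s` with `2s ≤ n + 1`, the Taylor remainder of `exp` after `n` terms is at most twice its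
leading term `sⁿ/n!` on the disc `‖z‖ ≤ s`, since the later terms are dominated by a geometric
series of ratio `1/2`. Integrating this pointwise bound for `z = isx`, `|x| ≤ 1`, against `μ`
controls the truncated moment series of the characteristic function. With `n = N + 1` and
`s ≤ N/e`, Stirling's lower bound `n! ≥ √(2πn) (n/e)ⁿ` gives `2 sⁿ/n! ≤ 2/√(2π(N+1)) ≤ √(2/(πN))`.
-/

open MeasureTheory
open Real Complex Finset Nat

lemma Real.tsum_pow_div_factorial_add (x : ℝ) (n : ℕ) :
    ∑' k, x ^ (n + k) / (n + k)! = rexp x - ∑ k ∈ range n, x ^ k / k ! := by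
  rw [Real.exp_eq_exp_ℝ, NormedSpace.exp_eq_tsum_div, eq_sub_iff_add_eq']
  beta_reduce
  rw [← (Real.summable_pow_div_factorial x).sum_add_tsum_nat_add n]
  simp only [add_comm n]

lemma Real.exp_sub_sum_range_le {x : ℝ} {n : ℕ} (hx : 0 ≤ x) (h : 2 * x ≤ n + 1) :
    rexp x - ∑ k ∈ range n, x ^ k / k ! ≤ x ^ n / n ! * 2 := by
  have hbound := Complex.exp_bound' (x := x) (n := n) (by
    rw [Complex.norm_real, norm_of_nonneg hx, div_le_iff₀ (by positivity)]; push_cast; linarith)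
  rw [Complex.norm_real, norm_of_nonneg hx] at hbound
  refine (le_abs_self _).trans (le_of_eq_of_le ?_ hbound)
  rw [← Real.norm_eq_abs, ← Complex.norm_real]
  push_cast
  rfl

lemma pow_div_factorial_le_of_exp_one_mul_le {x : ℝ} {n : ℕ} (hx : 0 ≤ x) (hn : 0 < n)
    (h : rexp 1 * x ≤ n) : x ^ n / n ! ≤ 1 / √(2 * π * n) := by
  have hpow : x ^ n ≤ (n / rexp 1) ^ n := by
    gcongr
    rw [le_div_iff₀ (exp_pos 1)]; linarith
  rw [div_le_div_iff₀ (by positivity) (by positivity), one_mul]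
  calc x ^ n * √(2 * π * n) ≤ (n / rexp 1) ^ n * √(2 * π * n) := by gcongr
    _ ≤ n ! := by rw [mul_comm]; exact Stirling.le_factorial_stirling n

lemma pow_succ_div_factorial_mul_two_le_sqrt {s : ℝ} {N : ℕ} (hs : 0 ≤ s) (hN : 1 ≤ N)
    (h : rexp 1 * s ≤ N) : s ^ (N + 1) / (N + 1)! * 2 ≤ √(2 / (π * N)) := by
  have hN0 : (0 : ℝ) < N := by exact_mod_cast hN
  have hstir := pow_div_factorial_le_of_exp_one_mul_le hs N.succ_pos (by push_cast; linarith)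
  rw [le_sqrt (by positivity) (by positivity)]
  calc (s ^ (N + 1) / (N + 1)! * 2) ^ 2 ≤ (1 / √(2 * π * (N + 1 : ℕ)) * 2) ^ 2 := by gcongr
    _ = 2 / (π * (N + 1)) := by
      rw [mul_pow, div_pow, sq_sqrt (by positivity)]; push_cast; field_simp
    _ ≤ 2 / (π * N) := by gcongr; linarith

lemma norm_cexp_I_mul_sub_sum_range_le {s x : ℝ} {n : ℕ} (hs : 0 ≤ s) (hx : |x| ≤ 1)
    (h : 2 * s ≤ n + 1) :
    ‖cexp (I * s * x) - ∑ k ∈ range n, (I * s * x) ^ k / (k ! : ℂ)‖ ≤ s ^ n / n ! * 2 := by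
  have hnorm : ‖I * s * x‖ ≤ s := by
    rw [norm_mul, norm_mul, Complex.norm_I, one_mul, Complex.norm_real, Complex.norm_real,
      norm_of_nonneg hs, Real.norm_eq_abs]
    exact mul_le_of_le_one_right hs hx
  refine (Complex.exp_bound' ?_).trans ?_
  · rw [div_le_iff₀ (by positivity)]; push_cast; linarith
  · gcongr

section Moments

variable {μ : Measure ℝ}

lemma integrable_pow_of_ae_abs_le_one [IsFiniteMeasure μ] (hμ : ∀ᵐ x ∂μ, |x| ≤ 1) (k : ℕ) :
    Integrable (fun x ↦ x ^ k) μ :=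
  .of_bound (continuous_pow k).aestronglyMeasurable 1 <| hμ.mono fun x hx ↦ by
    rw [norm_pow, Real.norm_eq_abs]; exact pow_le_one₀ (abs_nonneg x) hx

lemma integral_cexp_I_mul_sub_sum_moments [IsFiniteMeasure μ] (hμ : ∀ᵐ x ∂μ, |x| ≤ 1)
    (s : ℝ) (n : ℕ) :
    (∫ x, cexp (I * s * x) ∂μ) - ∑ k ∈ range n, (I * s) ^ k * ((∫ x, x ^ k ∂μ : ℝ) : ℂ) / k ! =
      ∫ x, (cexp (I * s * x) - ∑ k ∈ range n, (I * s * x) ^ k / (k ! : ℂ)) ∂μ := by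
  have hterm (k : ℕ) : (fun x : ℝ ↦ (I * s * x) ^ k / (k ! : ℂ)) =
      fun x ↦ (I * s) ^ k / (k ! : ℂ) * ((x ^ k : ℝ) : ℂ) := by
    ext x; push_cast; ring
  have hint (k : ℕ) : Integrable (fun x : ℝ ↦ (I * s * x) ^ k / (k ! : ℂ)) μ := by
    rw [hterm]; exact ((integrable_pow_of_ae_abs_le_one hμ k).ofReal).const_mul _
  have hexp : Integrable (fun x : ℝ ↦ cexp (I * s * x)) μ :=
    .of_bound (by fun_prop) 1 <| .of_forall fun x ↦ by simp [Complex.norm_exp]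
  rw [integral_sub hexp (integrable_finsetSum _ fun k _ ↦ hint k),
    integral_finsetSum _ fun k _ ↦ hint k]
  congr 1
  refine sum_congr rfl fun k _ ↦ ?_
  rw [hterm, integral_const_mul, integral_complex_ofReal]
  ring

lemma norm_integral_cexp_I_mul_sub_sum_moments_le [IsProbabilityMeasure μ]
    (hμ : ∀ᵐ x ∂μ, |x| ≤ 1) {s : ℝ} {n : ℕ} (hs : 0 ≤ s) (h : 2 * s ≤ n + 1) :
    ‖(∫ x, cexp (I * s * x) ∂μ) -
        ∑ k ∈ range n, (I * s) ^ k * ((∫ x, x ^ k ∂μ : ℝ) : ℂ) / (k ! : ℂ)‖ ≤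
      s ^ n / n ! * 2 := by
  rw [integral_cexp_I_mul_sub_sum_moments hμ]
  simpa using norm_integral_le_of_norm_le_const
    (hμ.mono fun x hx ↦ norm_cexp_I_mul_sub_sum_range_le hs hx h)

end Moments

/-- For `s > 0` and `N ≥ e·s`, `N ≥ 1`, the exponential Taylor tail satisfies
`∑_{k>N} sᵏ/k! ≤ √(2/(πN))`; consequently truncating the moment series of the
characteristic function of a probability measure on [0,1] after `N` terms incurs an
error of at most `√(2/(πN))`. -/
theorem charFun_truncation_error (s : ℝ) (hs : 0 < s) (N : ℕ) (hN1 : 1 ≤ N)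
    (hNs : Real.exp 1 * s ≤ N)
    (μ : Measure ℝ) [IsProbabilityMeasure μ] (hsupp : μ (Set.Icc (0:ℝ) 1)ᶜ = 0) :
    (∑' k : ℕ, s ^ (N + 1 + k) / (Nat.factorial (N + 1 + k) : ℝ)) ≤
        Real.sqrt (2 / (Real.pi * N)) ∧
    ‖(∫ x, Complex.exp (Complex.I * s * (x : ℂ)) ∂μ) -
        ∑ k ∈ Finset.range (N + 1),
          (Complex.I * s) ^ k * ((∫ x, x ^ k ∂μ : ℝ) : ℂ) / (Nat.factorial k : ℂ)‖ ≤
      Real.sqrt (2 / (Real.pi * N)) := by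
  have hbound := pow_succ_div_factorial_mul_two_le_sqrt hs.le hN1 hNs
  have h2s : 2 * s ≤ (N + 1 : ℕ) + 1 := by
    have := Real.add_one_le_exp 1
    push_cast; nlinarith
  have hμ : ∀ᵐ x ∂μ, |x| ≤ 1 := by
    filter_upwards [mem_ae_iff.2 hsupp] with x hx
    exact abs_le.2 ⟨by linarith [hx.1], hx.2⟩
  refine ⟨?_, (norm_integral_cexp_I_mul_sub_sum_moments_le hμ hs.le h2s).trans hbound⟩
  rw [Real.tsum_pow_div_factorial_add]
  exact (Real.exp_sub_sum_range_le hs.le h2s).trans hbound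
end

section
/- For n ∈ ℕ define the shifted Legendre polynomial R_n(x) = ∑_{j=0}^{n} C(n,j)² (x−1)^{n−j} x^j, where C(n,j) is the binomial coefficient. Then for all m, n ∈ ℕ, ∫₀¹ R_n(x) R_m(x) dx = δ_{mn}/(2n+1), where δ_{mn} is the Kronecker delta. -/
/-!
Expanding `R_n · x^k` into Beta integrals `∫₀¹ (x-1)^a x^b = (-1)^a a! b!/(a+b+1)!` gives
`∫₀¹ R_n x^k = n! k!/(n+k+1)! · Δⁿ[j ↦ C(j+k, k)](0)`, and the `n`-th forward difference of
this degree-`k` polynomial in `j` is `δ_{kn}` for `k ≤ n`. So `R_n` is orthogonal to every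
polynomial of degree `< n`, while `R_n` has degree `n` and leading coefficient
`∑ C(n,j)² = C(2n,n)`, whence `∫₀¹ R_n² = C(2n,n) n!²/(2n+1)! = 1/(2n+1)`.
-/

open Finset Polynomial Nat

theorem fwdDiff_iter_choose_of_le {k n : ℕ} (hk : k ≤ n) (y : ℕ) :
    (fwdDiff 1)^[n] (fun x ↦ x.choose k : ℕ → ℤ) y = if n = k then 1 else 0 := by
  obtain ⟨d, rfl⟩ := Nat.exists_eq_add_of_le hk
  have hchoose : (fwdDiff 1)^[k] (fun x ↦ x.choose k : ℕ → ℤ) = fun _ ↦ 1 := by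
    simpa using fwdDiff_iter_choose 0 k
  rw [add_comm, Function.iterate_add_apply, hchoose]
  cases d with
  | zero => simp
  | succ d =>
    rw [Function.iterate_succ_apply, fwdDiff_const, Function.iterate_fixed (fwdDiff_const 1 0)]
    simp

theorem sum_range_neg_one_pow_mul_choose_mul_add_choose {k n : ℕ} (hk : k ≤ n) :
    ∑ j ∈ range (n + 1), (-1 : ℤ) ^ (n - j) * n.choose j * (j + k).choose k =
      if k = n then 1 else 0 := by
  have h := fwdDiff_iter_eq_sum_shift 1 (fun x : ℕ ↦ (x.choose k : ℤ)) n k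
  rw [fwdDiff_iter_choose_of_le hk] at h
  simpa [eq_comm, add_comm] using h.symm

theorem integral_sub_one_pow_mul_pow (a b : ℕ) :
    ∫ x in (0:ℝ)..1, (x - 1) ^ a * x ^ b = (-1) ^ a * (a ! * b !) / (a + b + 1)! := by
  induction a generalizing b with
  | zero => simp [factorial_succ]; field_simp
  | succ a ih =>
    have hderiv (x : ℝ) : HasDerivAt (fun y ↦ (y - 1) ^ (a + 1) * y ^ (b + 1))
        ((a + 1) * ((x - 1) ^ a * x ^ (b + 1)) + (b + 1) * ((x - 1) ^ (a + 1) * x ^ b)) x := by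
      refine ((((hasDerivAt_id' x).sub_const 1).fun_pow (a + 1)).fun_mul
        (hasDerivAt_pow (b + 1) x)).congr_deriv ?_
      simp only [add_tsub_cancel_right]
      push_cast
      ring
    have hparts : ∫ x in (0:ℝ)..1,
        ((a + 1) * ((x - 1) ^ a * x ^ (b + 1)) + (b + 1) * ((x - 1) ^ (a + 1) * x ^ b)) = 0 := by
      rw [intervalIntegral.integral_eq_sub_of_hasDerivAt (fun x _ ↦ hderiv x)
        (Continuous.intervalIntegrable (by fun_prop) _ _)]
      simp
    rw [intervalIntegral.integral_add (Continuous.intervalIntegrable (by fun_prop) _ _)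
      (Continuous.intervalIntegrable (by fun_prop) _ _), intervalIntegral.integral_const_mul,
      intervalIntegral.integral_const_mul, ih] at hparts
    rw [← mul_right_inj' (show (b : ℝ) + 1 ≠ 0 by positivity), eq_neg_of_add_eq_zero_right hparts,
      show a + (b + 1) + 1 = a + 1 + b + 1 by ring]
    push_cast [factorial_succ]
    ring

-- Equals `(-1)ⁿ • Polynomial.shiftedLegendre n`.
noncomputable def shiftedLegendreR (R : Type*) [CommRing R] (n : ℕ) : R[X] :=
  ∑ j ∈ range (n + 1), C ((n.choose j : R) ^ 2) * (X - 1) ^ (n - j) * X ^ j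

section CommRing

variable {R : Type*} [CommRing R]

@[simp]
theorem eval_shiftedLegendreR (n : ℕ) (x : R) :
    (shiftedLegendreR R n).eval x =
      ∑ j ∈ range (n + 1), (n.choose j : R) ^ 2 * (x - 1) ^ (n - j) * x ^ j := by
  simp [shiftedLegendreR, eval_finsetSum]

theorem natDegree_shiftedLegendreR_le (n : ℕ) : (shiftedLegendreR R n).natDegree ≤ n := by
  refine natDegree_sum_le_of_forall_le _ _ fun j hj ↦ ?_
  have := mem_range.1 hj
  compute_degree
  omega

theorem coeff_shiftedLegendreR_self (n : ℕ) :
    (shiftedLegendreR R n).coeff n = (2 * n).choose n := by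
  have hcoeff (j : ℕ) (hj : j ≤ n) : ((X - 1 : R[X]) ^ (n - j) * X ^ j).coeff n = 1 := by
    rw [← Nat.sub_add_cancel hj, coeff_mul_X_pow, Nat.sub_add_cancel hj, sub_eq_add_neg, ← C_1,
      ← C_neg, coeff_X_add_C_pow]
    simp
  rw [shiftedLegendreR, finsetSum_coeff, ← Nat.sum_range_choose_sq]
  push_cast
  refine sum_congr rfl fun j hj ↦ ?_
  rw [mul_assoc, coeff_C_mul, hcoeff j (by have := mem_range.1 hj; omega), mul_one]

end CommRing

theorem integral_eval_shiftedLegendreR_mul_pow {k n : ℕ} (hk : k ≤ n) :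
    ∫ x in (0:ℝ)..1, (shiftedLegendreR ℝ n).eval x * x ^ k =
      if k = n then (n ! : ℝ) ^ 2 / (2 * n + 1)! else 0 := by
  have hterm (j : ℕ) (hj : j ∈ range (n + 1)) :
      ∫ x in (0:ℝ)..1, (n.choose j : ℝ) ^ 2 * (x - 1) ^ (n - j) * x ^ j * x ^ k =
        (n ! * k ! / (n + k + 1)! : ℝ) *
          (((-1 : ℤ) ^ (n - j) * n.choose j * (j + k).choose k : ℤ) : ℝ) := by
    have hjn : j ≤ n := Nat.lt_succ_iff.1 (mem_range.1 hj)
    simp_rw [mul_assoc, ← pow_add]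
    rw [intervalIntegral.integral_const_mul, integral_sub_one_pow_mul_pow,
      show n - j + (j + k) + 1 = n + k + 1 by omega]
    push_cast
    rw [Nat.cast_choose ℝ hjn, Nat.cast_choose ℝ (Nat.le_add_left k j), Nat.add_sub_cancel]
    field_simp
  simp_rw [eval_shiftedLegendreR, sum_mul]
  rw [intervalIntegral.integral_finsetSum
      (fun j _ ↦ Continuous.intervalIntegrable (by fun_prop) _ _),
    sum_congr rfl hterm, ← mul_sum, ← Int.cast_sum,
    sum_range_neg_one_pow_mul_choose_mul_add_choose hk]
  split_ifs with h
  · subst h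
    rw [two_mul]
    push_cast
    ring
  · simp

theorem integral_eval_shiftedLegendreR_mul_eval {n : ℕ} {p : ℝ[X]} (hp : p.natDegree ≤ n) :
    ∫ x in (0:ℝ)..1, (shiftedLegendreR ℝ n).eval x * p.eval x =
      p.coeff n * ((n ! : ℝ) ^ 2 / (2 * n + 1)!) := by
  simp_rw [eval_eq_sum_range' (Nat.lt_succ_of_le hp), mul_sum, mul_left_comm _ (p.coeff _)]
  rw [intervalIntegral.integral_finsetSum
    (fun i _ ↦ Continuous.intervalIntegrable (by fun_prop) _ _)]
  simp_rw [intervalIntegral.integral_const_mul]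
  rw [sum_congr rfl fun i hi ↦ by
    rw [integral_eval_shiftedLegendreR_mul_pow (Nat.lt_succ_iff.1 (mem_range.1 hi))]]
  simp

theorem integral_eval_shiftedLegendreR_mul_eval_shiftedLegendreR (m n : ℕ) :
    ∫ x in (0:ℝ)..1, (shiftedLegendreR ℝ n).eval x * (shiftedLegendreR ℝ m).eval x =
      if m = n then 1 / (2 * (n : ℝ) + 1) else 0 := by
  wlog h : m ≤ n generalizing m n
  · rw [intervalIntegral.integral_congr fun x _ ↦ mul_comm _ _, this n m (by omega),
      if_neg (by omega), if_neg (by omega)]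
  rw [integral_eval_shiftedLegendreR_mul_eval ((natDegree_shiftedLegendreR_le m).trans h)]
  rcases h.eq_or_lt with rfl | hlt
  · have hfact : ((2 * m).choose m * m ! * m ! : ℝ) = (2 * m)! := by
      exact_mod_cast two_mul m ▸ Nat.add_choose_mul_factorial_mul_factorial m m
    have hchoose : ((2 * m).choose m : ℝ) ≠ 0 := mod_cast (Nat.choose_pos (by omega)).ne'
    rw [if_pos rfl, coeff_shiftedLegendreR_self]
    push_cast [factorial_succ]
    rw [← hfact]
    field_simp
  · rw [coeff_eq_zero_of_natDegree_lt ((natDegree_shiftedLegendreR_le m).trans_lt hlt),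
      if_neg hlt.ne, zero_mul]

/-- Orthogonality of the shifted Legendre polynomials
`R_n(x) = ∑_{j=0}^n C(n,j)² (x−1)^{n−j} xʲ` on [0,1]:
`∫₀¹ R_n R_m = δ_{mn}/(2n+1)`. -/
theorem shiftedLegendre_orthogonality (n m : ℕ) :
    ∫ x in (0:ℝ)..1,
        (∑ j ∈ Finset.range (n + 1), (n.choose j : ℝ) ^ 2 * (x - 1) ^ (n - j) * x ^ j) *
        (∑ j ∈ Finset.range (m + 1), (m.choose j : ℝ) ^ 2 * (x - 1) ^ (m - j) * x ^ j) =
      if m = n then 1 / (2 * (n : ℝ) + 1) else 0 := by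
  simpa using integral_eval_shiftedLegendreR_mul_eval_shiftedLegendreR m n
end

section
/- For k ∈ ℕ with k ≥ 1, define the shifted Legendre polynomial R_k(x) = ∑_{j=0}^{k} C(k,j)² (x−1)^{k−j} x^j and the shifted Jacobi polynomial R_{k−1}^{(1,1)}(x) = ∑_{j=0}^{k−1} C(k,j) C(k,k−1−j) (x−1)^{k−1−j} x^j. Then for all x ∈ [0,1], ∫₀^x R_k(t) dt = −(1/k) · x(1−x) · R_{k−1}^{(1,1)}(x). -/
/-!
`x (x - 1) R_{k-1}^{(1,1)}(x) = ∑_{j<k} C(k,j) C(k,j+1) x^{j+1} (x-1)^{k-j}`, and differentiating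
this termwise, the identity `(j + 1) C(k,j+1) = (k - j) C(k,j)` splits the `j`-th term into
`(k - j)` copies of the `j`-th summand of `R_k` and `(j + 1)` copies of the `(j+1)`-st. Every
summand of `R_k` is thereby hit exactly `k` times, so `x (x - 1) R_{k-1}^{(1,1)}(x) / k` is the
primitive of `R_k` vanishing at `0`.
-/

open Finset

theorem Finset.sum_range_tsub_nsmul_add_succ_nsmul {M : Type*} [AddCommMonoid M] (k : ℕ)
    (f : ℕ → M) :
    ∑ j ∈ range k, ((k - j) • f j + (j + 1) • f (j + 1)) = k • ∑ j ∈ range (k + 1), f j := by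
  have hleft : ∑ j ∈ range k, (k - j) • f j = ∑ j ∈ range (k + 1), (k - j) • f j := by
    simp [sum_range_succ]
  have hright : ∑ j ∈ range k, (j + 1) • f (j + 1) = ∑ j ∈ range (k + 1), j • f j := by
    simp [sum_range_succ']
  rw [sum_add_distrib, hleft, hright, ← sum_add_distrib, smul_sum]
  refine sum_congr rfl fun j hj => ?_
  rw [← add_smul, Nat.sub_add_cancel (Nat.lt_succ_iff.mp (mem_range.mp hj))]

section

variable {R : Type*} [CommRing R]

def shiftedLegendre (k : ℕ) (x : R) : R :=
  ∑ j ∈ range (k + 1), (k.choose j : R) ^ 2 * (x - 1) ^ (k - j) * x ^ j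

/-- `R_{k-1}^{(1,1)}`; the index is shifted so that its coefficients are the binomials of `k`. -/
def shiftedJacobiOneOne (k : ℕ) (x : R) : R :=
  ∑ j ∈ range k, (k.choose j : R) * (k.choose (k - 1 - j) : R) * (x - 1) ^ (k - 1 - j) * x ^ j

theorem mul_sub_one_mul_shiftedJacobiOneOne (k : ℕ) (x : R) :
    x * (x - 1) * shiftedJacobiOneOne k x =
      ∑ j ∈ range k, (k.choose j * k.choose (j + 1) : R) * (x ^ (j + 1) * (x - 1) ^ (k - j)) := by
  rw [shiftedJacobiOneOne, mul_sum]
  refine sum_congr rfl fun j hj => ?_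
  obtain ⟨m, rfl⟩ : ∃ m, k = j + m + 1 := ⟨k - j - 1, by have := mem_range.mp hj; omega⟩
  rw [Nat.choose_symm_of_eq_add (show j + m + 1 = (j + m + 1 - 1 - j) + (j + 1) by omega),
    show j + m + 1 - 1 - j = m by omega, show j + m + 1 - j = m + 1 by omega]
  ring

end

section

variable {𝕜 : Type*} [NontriviallyNormedField 𝕜]

theorem hasDerivAt_pow_mul_sub_one_pow (a b : ℕ) (x : 𝕜) :
    HasDerivAt (fun t => t ^ a * (t - 1) ^ b)
      (a * x ^ (a - 1) * (x - 1) ^ b + x ^ a * (b * (x - 1) ^ (b - 1))) x :=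
  (hasDerivAt_pow a x).mul (((hasDerivAt_id x).sub_const 1).pow b |>.congr_deriv (by simp))

theorem hasDerivAt_mul_sub_one_mul_shiftedJacobiOneOne (k : ℕ) (x : 𝕜) :
    HasDerivAt (fun t => t * (t - 1) * shiftedJacobiOneOne k t) (k * shiftedLegendre k x) x := by
  simp only [mul_sub_one_mul_shiftedJacobiOneOne]
  refine HasDerivAt.fun_sum (fun j _ => (hasDerivAt_pow_mul_sub_one_pow _ _ x).const_mul _)
    |>.congr_deriv ?_
  rw [shiftedLegendre, ← nsmul_eq_mul, ← sum_range_tsub_nsmul_add_succ_nsmul]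
  refine sum_congr rfl fun j hj => ?_
  obtain ⟨m, rfl⟩ : ∃ m, k = j + m + 1 := ⟨k - j - 1, by have := mem_range.mp hj; omega⟩
  have hchoose : ((j + m + 1).choose (j + 1) * (j + 1) : 𝕜) = (j + m + 1).choose j * (m + 1) := by
    have := Nat.choose_succ_right_eq (j + m + 1) j
    rw [show j + m + 1 - j = m + 1 by omega] at this
    exact_mod_cast congrArg (Nat.cast : ℕ → 𝕜) this
  simp only [show j + m + 1 - j = m + 1 by omega, show j + m + 1 - (j + 1) = m by omega,
    Nat.add_sub_cancel, nsmul_eq_mul]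
  push_cast
  linear_combination (x ^ j * (x - 1) ^ m * ((j + m + 1).choose j * (x - 1)
    - (j + m + 1).choose (j + 1) * x)) * hchoose

end

theorem shiftedLegendre_integral_general (k : ℕ) (hk : 1 ≤ k) (x : ℝ) :
    ∫ t in (0:ℝ)..x,
        (∑ j ∈ Finset.range (k + 1), (k.choose j : ℝ) ^ 2 * (t - 1) ^ (k - j) * t ^ j) =
      -(1 / (k : ℝ)) * (x * (1 - x)) *
        ∑ j ∈ Finset.range k,
          (k.choose j : ℝ) * (k.choose (k - 1 - j) : ℝ) * (x - 1) ^ (k - 1 - j) * x ^ j := by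
  have hk0 : (k : ℝ) ≠ 0 := Nat.cast_ne_zero.mpr (by omega)
  have hprimitive (t : ℝ) : HasDerivAt (fun t : ℝ => t * (t - 1) * shiftedJacobiOneOne k t / k)
      (shiftedLegendre k t) t := by
    simpa [hk0] using (hasDerivAt_mul_sub_one_mul_shiftedJacobiOneOne k t).div_const (k : ℝ)
  have hcont : Continuous (shiftedLegendre k : ℝ → ℝ) := by
    unfold shiftedLegendre; fun_prop
  change ∫ t in (0:ℝ)..x, shiftedLegendre k t = _
  rw [intervalIntegral.integral_eq_sub_of_hasDerivAt (fun t _ => hprimitive t)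
    (hcont.intervalIntegrable 0 x)]
  simp only [shiftedJacobiOneOne]
  ring

/-- The integral of the shifted Legendre polynomial
`R_k(x) = ∑_{j=0}^k C(k,j)² (x−1)^{k−j} xʲ` is expressed via the shifted Jacobi
polynomial `R_{k−1}^{(1,1)}(x) = ∑_{j=0}^{k−1} C(k,j) C(k,k−1−j) (x−1)^{k−1−j} xʲ`:
`∫₀ˣ R_k = −(1/k)·x(1−x)·R_{k−1}^{(1,1)}(x)` for `x ∈ [0,1]`. -/
theorem shiftedLegendre_integral (k : ℕ) (hk : 1 ≤ k) (x : ℝ)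
    (hx : x ∈ Set.Icc (0:ℝ) 1) :
    ∫ t in (0:ℝ)..x,
        (∑ j ∈ Finset.range (k + 1), (k.choose j : ℝ) ^ 2 * (t - 1) ^ (k - j) * t ^ j) =
      -(1 / (k : ℝ)) * (x * (1 - x)) *
        ∑ j ∈ Finset.range k,
          (k.choose j : ℝ) * (k.choose (k - 1 - j) : ℝ) * (x - 1) ^ (k - 1 - j) * x ^ j :=
  shiftedLegendre_integral_general k hk x
end

section
/- Let m₁, m₂ ∈ ℝ satisfy 0 < m₁ < 1, m₁² < m₂ < m₁. Define α + 1 = (m₁ − m₂)(1 − m₁)/(m₂ − m₁²) and β + 1 = (α + 1) m₁/(1 − m₁). Then the first two (unnormalized) Fourier–Jacobi coefficients vanish: (1+β)(m₁ − 1) + (1+α) m₁ = 0, and ((2+β)(1+β)/2)(1 − 2m₁ + m₂) + (2+α)(2+β)(m₂ − m₁) + ((2+α)(1+α)/2) m₂ = 0. -/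
/-!
Write `a = α + 1`, `b = β + 1`. The two parameter formulas say precisely that the moments of the
Beta weight `(1 - x)^α x^β` agree with the given ones: the mean relation `b = m₁ (a + b)` and the
Beta moment recursion `m₂ (a + b + 1) = m₁ (b + 1)`. The coefficients `c₁`, `c₂` are linear in the
moments and vanish as soon as these two relations hold.
-/

namespace FourierJacobi

variable {K : Type*} [Field K] (α β m₁ m₂ : K)

def coeffOne : K := (1 + β) * (m₁ - 1) + (1 + α) * m₁

def coeffTwo : K :=
  ((2 + β) * (1 + β) / 2) * (1 - 2 * m₁ + m₂) +
    (2 + α) * (2 + β) * (m₂ - m₁) + ((2 + α) * (1 + α) / 2) * m₂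

variable {α β m₁ m₂}

theorem mean_eq_of_param_eq (hm₁ : m₁ ≠ 1) (hβ : β + 1 = (α + 1) * m₁ / (1 - m₁)) :
    (β + 1) * (1 - m₁) = (α + 1) * m₁ := by
  rw [hβ, div_mul_cancel₀ _ (sub_ne_zero.mpr hm₁.symm)]

theorem secondMoment_eq_of_param_eq (hm₁ : m₁ ≠ 1) (hm₂ : m₂ ≠ m₁ ^ 2)
    (hα : α + 1 = (m₁ - m₂) * (1 - m₁) / (m₂ - m₁ ^ 2))
    (hmean : (β + 1) * (1 - m₁) = (α + 1) * m₁) :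
    m₂ * (α + β + 3) = m₁ * (β + 2) := by
  have hα' : (α + 1) * (m₂ - m₁ ^ 2) = (m₁ - m₂) * (1 - m₁) := by
    rw [hα, div_mul_cancel₀ _ (sub_ne_zero.mpr hm₂)]
  -- multiplying the claim by `1 - m₁` turns it into `hα'`, via `(1 - m₁)(a + b) = a`
  have hscaled : (1 - m₁) * (m₂ * (α + β + 3) - m₁ * (β + 2)) = 0 := by
    linear_combination hα' + (m₂ - m₁) * hmean
  exact sub_eq_zero.mp ((mul_eq_zero.mp hscaled).resolve_left (sub_ne_zero.mpr hm₁.symm))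

theorem coeffOne_eq_zero (hmean : (β + 1) * (1 - m₁) = (α + 1) * m₁) :
    coeffOne α β m₁ = 0 := by
  unfold coeffOne
  linear_combination -hmean

theorem coeffTwo_eq_zero [CharZero K] (hmean : (β + 1) * (1 - m₁) = (α + 1) * m₁)
    (hsecond : m₂ * (α + β + 3) = m₁ * (β + 2)) :
    coeffTwo α β m₁ m₂ = 0 := by
  unfold coeffTwo
  linear_combination (α + β + 4) / 2 * hsecond + (β + 2) / 2 * hmean

end FourierJacobi

open FourierJacobi in
theorem fourierJacobi_first_two_coeffs_vanish_general (m₁ m₂ α β : ℝ)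
    (h1 : m₁ < 1) (h2 : m₁ ^ 2 < m₂)
    (hα : α + 1 = (m₁ - m₂) * (1 - m₁) / (m₂ - m₁ ^ 2))
    (hβ : β + 1 = (α + 1) * m₁ / (1 - m₁)) :
    (1 + β) * (m₁ - 1) + (1 + α) * m₁ = 0 ∧
    ((2 + β) * (1 + β) / 2) * (1 - 2 * m₁ + m₂) +
        (2 + α) * (2 + β) * (m₂ - m₁) + ((2 + α) * (1 + α) / 2) * m₂ = 0 := by
  have hmean := mean_eq_of_param_eq h1.ne hβ
  have hsecond := secondMoment_eq_of_param_eq h1.ne h2.ne' hα hmean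
  exact ⟨coeffOne_eq_zero hmean, coeffTwo_eq_zero hmean hsecond⟩

/-- With the Fourier–Jacobi parameters `α+1 = (m₁−m₂)(1−m₁)/(m₂−m₁²)` and
`β+1 = (α+1)m₁/(1−m₁)`, the first two (unnormalized) Fourier–Jacobi coefficients
vanish. -/
theorem fourierJacobi_first_two_coeffs_vanish (m₁ m₂ α β : ℝ)
    (h0 : 0 < m₁) (h1 : m₁ < 1) (h2 : m₁ ^ 2 < m₂) (h3 : m₂ < m₁)
    (hα : α + 1 = (m₁ - m₂) * (1 - m₁) / (m₂ - m₁ ^ 2))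
    (hβ : β + 1 = (α + 1) * m₁ / (1 - m₁)) :
    (1 + β) * (m₁ - 1) + (1 + α) * m₁ = 0 ∧
    ((2 + β) * (1 + β) / 2) * (1 - 2 * m₁ + m₂) +
        (2 + α) * (2 + β) * (m₂ - m₁) + ((2 + α) * (1 + α) / 2) * m₂ = 0 :=
  fourierJacobi_first_two_coeffs_vanish_general m₁ m₂ α β h1 h2 hα hβ
end

section
/- Let a > 0 and s > 0. The function f(x) = exp(s√a − s√(x+a)) is completely monotonic on [0,∞): f is continuous on [0,∞), infinitely differentiable on (0,∞), and (−1)^n f^{(n)}(x) ≥ 0 for all n ∈ ℕ and all x > 0. Consequently, the sequence (f(k))_{k=0}^∞ is a completely monotone sequence. -/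
open Set Finset

noncomputable def cmF (a s : ℝ) : ℝ → ℝ := fun y => Real.exp (s * Real.sqrt a - s * Real.sqrt (y + a))

lemma hasDerivAt_sqrt_add (a : ℝ) {x : ℝ} (hxa : 0 < x + a) :
    HasDerivAt (fun y => Real.sqrt (y + a)) (1 / (2 * Real.sqrt (x + a))) x := by
  simpa [Function.comp_def] using (Real.hasDerivAt_sqrt hxa.ne').comp x ((hasDerivAt_id x).add_const a)

lemma hasDerivAt_cmF (a s : ℝ) {x : ℝ} (hxa : 0 < x + a) :
    HasDerivAt (cmF a s) (cmF a s x * (-(s / (2 * Real.sqrt (x + a))))) x := by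
  have h1 : HasDerivAt (fun y => s * Real.sqrt a - s * Real.sqrt (y + a))
      (-(s * (1 / (2 * Real.sqrt (x + a))))) x :=
    (((hasDerivAt_sqrt_add a hxa).const_mul s)).const_sub (s * Real.sqrt a)
  convert! h1.exp using 1
  simp only [cmF]; ring

noncomputable def nextc (s : ℝ) (c : ℕ → ℝ) : ℕ → ℝ := fun k =>
  (if 2 ≤ k then ((k : ℝ) - 2) / 2 * c (k - 2) else 0) +
  (if 1 ≤ k then s / 2 * c (k - 1) else 0)

lemma nextc_nonneg {s : ℝ} (hs : 0 ≤ s) {c : ℕ → ℝ} (hc : ∀ k, 0 ≤ c k) (k : ℕ) :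
    0 ≤ nextc s c k := by
  unfold nextc
  apply add_nonneg
  · split_ifs with h
    · have : (2:ℝ) ≤ (k:ℝ) := by exact_mod_cast h
      exact mul_nonneg (by linarith) (hc _)
    · exact le_refl 0
  · split_ifs with h
    · exact mul_nonneg (by linarith) (hc _)
    · exact le_refl 0

lemma nextc_supp {s : ℝ} {c : ℕ → ℝ} {N : ℕ} (hcs : ∀ k, N ≤ k → c k = 0) :
    ∀ k, N + 2 ≤ k → nextc s c k = 0 := by
  intro k hk
  unfold nextc
  rw [hcs (k-2) (by omega), hcs (k-1) (by omega)]
  split_ifs <;> ring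

lemma hasDerivAt_term (a s : ℝ) {x : ℝ} (hxa : 0 < x + a) (k : ℕ) :
    HasDerivAt (fun y => (Real.sqrt (y + a))⁻¹ ^ k * cmF a s y)
      (-(((k : ℝ)/2 * (Real.sqrt (x+a))⁻¹ ^ (k+2) + s/2 * (Real.sqrt (x+a))⁻¹ ^ (k+1))
        * cmF a s x)) x := by
  have hw : 0 < Real.sqrt (x + a) := Real.sqrt_pos.2 hxa
  have hinv := (hasDerivAt_sqrt_add a hxa).fun_inv hw.ne'
  have hprod := (hinv.fun_pow k).fun_mul (hasDerivAt_cmF a s hxa)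
  convert! hprod using 1
  have hwne := hw.ne'
  revert hwne
  generalize Real.sqrt (x + a) = w
  intro hwne
  cases k with
  | zero => simp; field_simp
  | succ k =>
      simp only [Nat.add_sub_cancel, Nat.cast_add, Nat.cast_one]
      simp only [inv_pow]
      field_simp
      ring

lemma sum_reindex (s : ℝ) (N : ℕ) (c : ℕ → ℝ) (hcs : ∀ k, N ≤ k → c k = 0) (w C : ℝ) :
    (∑ k ∈ range (N+2), nextc s c k * w ^ k) * C
      = ∑ k ∈ range N, c k * (-(((k : ℝ)/2 * w ^ (k+2) + s/2 * w ^ (k+1)) * C)) * (-1) := by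
  simp only [nextc, add_mul, Finset.sum_add_distrib]
  rw [Finset.sum_range_succ' (fun k => (if 2 ≤ k then ((k : ℝ) - 2) / 2 * c (k - 2) else 0) * w ^ k) (N+1)]
  rw [Finset.sum_range_succ' (fun k => (if 2 ≤ (k+1) then ((((k+1) : ℕ) : ℝ) - 2) / 2 * c ((k+1) - 2) else 0) * w ^ (k+1)) N]
  rw [Finset.sum_range_succ' (fun k => (if 1 ≤ k then s / 2 * c (k - 1) else 0) * w ^ k) (N+1)]
  rw [Finset.sum_range_succ (fun k => (if 1 ≤ (k+1) then s / 2 * c ((k+1) - 1) else 0) * w ^ (k+1)) N]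
  simp only [Nat.add_sub_cancel]
  rw [hcs N le_rfl]
  have h0 : ¬ (2 ≤ 0) := by omega
  have h1 : ¬ (2 ≤ 0 + 1) := by omega
  have h2 : ¬ (1 ≤ 0) := by omega
  simp only [if_neg h0, if_neg h1, if_neg h2, Nat.le_refl, Nat.le_add_left, if_pos, zero_mul,
    add_zero, mul_zero, zero_add]
  rw [Finset.sum_mul, Finset.sum_mul, ← Finset.sum_add_distrib]
  apply Finset.sum_congr rfl
  intro k hk
  have : (((k+1+1 : ℕ)) : ℝ) - 2 = (k : ℝ) := by push_cast; ring
  simp only [show k+1+1-2 = k from by omega, this]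
  ring

lemma hasDerivAt_sum_rep (a s : ℝ) {x : ℝ} (hxa : 0 < x + a) (N : ℕ) (c : ℕ → ℝ)
    (hcs : ∀ k, N ≤ k → c k = 0) :
    HasDerivAt (fun y => (∑ k ∈ range N, c k * (Real.sqrt (y + a))⁻¹ ^ k) * cmF a s y)
      (-((∑ k ∈ range (N+2), nextc s c k * (Real.sqrt (x+a))⁻¹ ^ k) * cmF a s x)) x := by
  have hterm : ∀ k ∈ range N, HasDerivAt
      (fun y => c k * ((Real.sqrt (y + a))⁻¹ ^ k * cmF a s y))
      (c k * (-(((k : ℝ)/2 * (Real.sqrt (x+a))⁻¹ ^ (k+2) + s/2 * (Real.sqrt (x+a))⁻¹ ^ (k+1))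
        * cmF a s x))) x := fun k _ => (hasDerivAt_term a s hxa k).const_mul (c k)
  have hsum := HasDerivAt.fun_sum hterm
  have hfun : (fun y => ∑ k ∈ range N, c k * ((Real.sqrt (y + a))⁻¹ ^ k * cmF a s y))
      = fun y => (∑ k ∈ range N, c k * (Real.sqrt (y + a))⁻¹ ^ k) * cmF a s y := by
    funext y; rw [Finset.sum_mul]; exact Finset.sum_congr rfl fun k _ => (mul_assoc _ _ _).symm
  rw [hfun] at hsum
  convert! hsum using 1
  rw [sum_reindex s N c hcs (Real.sqrt (x+a))⁻¹ (cmF a s x), ← Finset.sum_mul]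
  ring

lemma cmF_rep (a s : ℝ) (ha : 0 < a) (hs : 0 ≤ s) (m : ℕ) :
    ∃ N : ℕ, ∃ c : ℕ → ℝ, (∀ k, 0 ≤ c k) ∧ (∀ k, N ≤ k → c k = 0) ∧
      ∀ x : ℝ, 0 < x → iteratedDeriv m (cmF a s) x
        = (-1)^m * ((∑ k ∈ range N, c k * (Real.sqrt (x+a))⁻¹ ^ k) * cmF a s x) := by
  induction m with
  | zero =>
      refine ⟨1, fun k => if k = 0 then 1 else 0, ?_, ?_, ?_⟩
      · intro k; by_cases h : k = 0 <;> simp [h]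
      · intro k hk; simp only []; rw [if_neg (by omega : ¬ k = 0)]
      · intro x hx; simp
  | succ m ih =>
      obtain ⟨N, c, hc0, hcs, hrep⟩ := ih
      refine ⟨N + 2, nextc s c, nextc_nonneg hs hc0, nextc_supp hcs, ?_⟩
      intro x hx
      have hxa : 0 < x + a := by linarith
      have heq : iteratedDeriv m (cmF a s) =ᶠ[nhds x]
          fun y => (-1)^m * ((∑ k ∈ range N, c k * (Real.sqrt (y+a))⁻¹ ^ k) * cmF a s y) :=
        Filter.eventuallyEq_of_mem (Ioi_mem_nhds hx) (fun y hy => hrep y hy)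
      rw [iteratedDeriv_succ, heq.deriv_eq]
      have hd := (hasDerivAt_sum_rep a s hxa N c hcs).const_mul ((-1:ℝ)^m)
      rw [hd.deriv]
      ring

lemma cmF_sign (a s : ℝ) (ha : 0 < a) (hs : 0 ≤ s) (n : ℕ) {x : ℝ} (hx : 0 < x) :
    0 ≤ (-1:ℝ)^n * iteratedDeriv n (cmF a s) x := by
  obtain ⟨N, c, hc0, _, hrep⟩ := cmF_rep a s ha hs n
  rw [hrep x hx, ← mul_assoc, ← mul_pow]
  simp only [neg_mul_neg, one_mul, one_pow]
  apply mul_nonneg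
  · exact Finset.sum_nonneg fun k _ => mul_nonneg (hc0 k) (pow_nonneg (inv_nonneg.2 (Real.sqrt_nonneg _)) k)
  · exact (Real.exp_pos _).le

lemma cmF_hder (a s : ℝ) (ha : 0 < a) (hs : 0 ≤ s) (m : ℕ) {x : ℝ} (hx : 0 < x) :
    HasDerivAt (iteratedDeriv m (cmF a s)) (iteratedDeriv (m+1) (cmF a s) x) x := by
  obtain ⟨N, c, hc0, hcs, hrep⟩ := cmF_rep a s ha hs m
  have hxa : 0 < x + a := by linarith
  have heq : (fun y => (-1:ℝ)^m * ((∑ k ∈ range N, c k * (Real.sqrt (y+a))⁻¹ ^ k) * cmF a s y))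
      =ᶠ[nhds x] iteratedDeriv m (cmF a s) :=
    Filter.eventuallyEq_of_mem (Ioi_mem_nhds hx) (fun y hy => (hrep y hy).symm)
  have hd := ((hasDerivAt_sum_rep a s hxa N c hcs).const_mul ((-1:ℝ)^m)).congr_of_eventuallyEq heq.symm
  have hv : iteratedDeriv (m+1) (cmF a s) x
      = (-1:ℝ)^m * -((∑ k ∈ range (N+2), nextc s c k * (Real.sqrt (x+a))⁻¹ ^ k) * cmF a s x) := by
    rw [iteratedDeriv_succ, hd.deriv]
  rw [hv]
  exact hd

lemma seq_key : ∀ (n : ℕ) (G : ℕ → ℝ → ℝ),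
    ContinuousOn (G 0) (Set.Ici 0) →
    (∀ m x, 0 < x → HasDerivAt (G m) (G (m+1) x) x) →
    (∀ m x, 0 < x → 0 ≤ (-1:ℝ)^m * G m x) →
    ∀ x : ℝ, 0 ≤ x → 0 ≤ (-1:ℝ)^n * (fwdDiff (1:ℝ))^[n] (G 0) x := by
  intro n
  induction n with
  | zero =>
      intro G hcont _ hsign x hx
      simp only [pow_zero, one_mul, Function.iterate_zero, id_eq]
      rcases eq_or_lt_of_le hx with h | h
      · have htend : Filter.Tendsto (G 0) (nhdsWithin 0 (Set.Ioi 0)) (nhds (G 0 0)) :=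
          ((hcont 0 Set.self_mem_Ici).mono Set.Ioi_subset_Ici_self).tendsto
        have hev : ∀ᶠ y in nhdsWithin 0 (Set.Ioi 0), 0 ≤ G 0 y := by
          filter_upwards [self_mem_nhdsWithin] with y hy
          simpa using hsign 0 y hy
        rw [← h]
        exact ge_of_tendsto htend hev
      · simpa using hsign 0 x h
  | succ n ih =>
      intro G hcont hder hsign x hx
      set H : ℕ → ℝ → ℝ := fun m y => G m y - G m (y + 1) with hH
      have hfd : (fwdDiff (1:ℝ))^[n+1] (G 0) = fun y => -((fwdDiff (1:ℝ))^[n] (H 0) y) := by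
        rw [Function.iterate_succ_apply]
        have h1 : fwdDiff (1:ℝ) (G 0) = (-1 : ℝ) • (H 0) := by
          funext y; simp [fwdDiff, hH]
        rw [h1, fwdDiff_iter_const_smul]
        funext y; simp
      rw [hfd]
      have : (-1:ℝ)^(n+1) * -((fwdDiff (1:ℝ))^[n] (H 0) x) = (-1:ℝ)^n * (fwdDiff (1:ℝ))^[n] (H 0) x := by
        ring
      rw [this]
      apply ih H
      · exact hcont.sub (hcont.comp (Continuous.continuousOn (by continuity))
          (fun y hy => by simp only [Set.mem_Ici] at *; linarith))
      · intro m y hy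
        exact (hder m y hy).sub ((hder m (y+1) (by linarith)).comp_add_const y 1)
      · intro m y hy
        obtain ⟨ξ, hξ, hslope⟩ := exists_hasDerivAt_eq_slope (G m) (G (m+1))
          (by linarith : y < y + 1)
          (fun z hz => by
            have hz0 : 0 < z := lt_of_lt_of_le hy (Set.mem_Icc.1 hz).1
            exact (hder m z hz0).continuousAt.continuousWithinAt)
          (fun z hz => hder m z (lt_trans hy (Set.mem_Ioo.1 hz).1))
        have h1 : G m (y+1) - G m y = G (m+1) ξ := by
          rw [hslope]; ring
        have h2 : 0 ≤ (-1:ℝ)^(m+1) * G (m+1) ξ := hsign (m+1) ξ (lt_trans hy (Set.mem_Ioo.1 hξ).1)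
        have : (-1:ℝ)^m * H m y = (-1:ℝ)^(m+1) * G (m+1) ξ := by
          rw [hH]; simp only []
          rw [show G m y - G m (y+1) = -(G m (y+1) - G m y) by ring, h1]
          ring
        rw [this]; exact h2
      · exact hx

lemma cmF_continuous (a s : ℝ) : Continuous (cmF a s) := by
  unfold cmF
  exact Real.continuous_exp.comp (continuous_const.sub (continuous_const.mul
    (Real.continuous_sqrt.comp (continuous_id.add continuous_const))))

lemma fwdDiff_bridge (g : ℝ → ℝ) (n k : ℕ) :
    (fwdDiff (1:ℕ))^[n] (fun j : ℕ => g j) k = (fwdDiff (1:ℝ))^[n] g (k:ℝ) := by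
  rw [fwdDiff_iter_eq_sum_shift, fwdDiff_iter_eq_sum_shift]
  apply Finset.sum_congr rfl
  intro i _
  have : ((k + i • 1 : ℕ) : ℝ) = (k:ℝ) + i • (1:ℝ) := by push_cast; simp
  rw [this]


/-- For `a, s > 0`, the function `f(x) = exp(s√a − s√(x+a))` is completely monotonic on
`[0,∞)`: it is continuous on `[0,∞)`, infinitely differentiable on `(0,∞)`, with
`(−1)ⁿ f⁽ⁿ⁾(x) ≥ 0` for all `n` and `x > 0`; consequently `(f(k))ₖ` is a completely
monotone sequence. -/
theorem intermediate_decay_completely_monotonic (a s : ℝ) (ha : 0 < a) (hs : 0 < s)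
    (f : ℝ → ℝ) (hf : ∀ x, f x = Real.exp (s * Real.sqrt a - s * Real.sqrt (x + a))) :
    ContinuousOn f (Set.Ici 0) ∧
    ContDiffOn ℝ (⊤ : ℕ∞) f (Set.Ioi 0) ∧
    (∀ n : ℕ, ∀ x : ℝ, 0 < x → 0 ≤ (-1 : ℝ) ^ n * iteratedDeriv n f x) ∧
    (∀ n k : ℕ, 0 ≤ (-1 : ℝ) ^ n * (fwdDiff 1)^[n] (fun j : ℕ => f j) k) := by
  have hfc : f = cmF a s := funext hf
  subst hfc
  refine ⟨(cmF_continuous a s).continuousOn, ?_, ?_, ?_⟩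
  · intro x hx
    have hx0 : (0:ℝ) < x := hx
    have hxa : 0 < x + a := by linarith
    apply ContDiffAt.contDiffWithinAt
    have h1 : ContDiffAt ℝ (⊤ : ℕ∞) (fun y : ℝ => y + a) x := (contDiff_id.add contDiff_const).contDiffAt
    have h2 : ContDiffAt ℝ (⊤ : ℕ∞) Real.sqrt (x + a) := Real.contDiffAt_sqrt hxa.ne'
    have h3 := h2.comp x h1
    have h4 : ContDiffAt ℝ (⊤ : ℕ∞) (fun y => s * Real.sqrt a - s * Real.sqrt (y + a)) x :=
      contDiffAt_const.sub (contDiffAt_const.mul h3)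
    exact (Real.contDiff_exp.contDiffAt).comp x h4
  · intro n x hx
    exact cmF_sign a s ha hs.le n hx
  · intro n k
    rw [fwdDiff_bridge]
    have := seq_key n (fun m => iteratedDeriv m (cmF a s))
      (by simp only [iteratedDeriv_zero]; exact (cmF_continuous a s).continuousOn)
      (fun m x hx => cmF_hder a s ha hs.le m hx)
      (fun m x hx => cmF_sign a s ha hs.le m hx)
      (k:ℝ) (Nat.cast_nonneg k)
    simpa only [iteratedDeriv_zero] using this
end

section
/- Let a > 0 and s > 0. The function f(x) = a^s (log(x+1) + a)^{−s} is completely monotonic on [0,∞): f is continuous on [0,∞), infinitely differentiable on (0,∞), and (−1)^n f^{(n)}(x) ≥ 0 for all n ∈ ℕ and all x > 0. -/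
open Real Finset

noncomputable def cc (a s : ℝ) : ℕ → ℕ → ℝ
  | 0, 0 => a ^ s
  | 0, _+1 => 0
  | n+1, 0 => cc a s n 0 * n
  | n+1, k+1 => cc a s n k * (s + k) + cc a s n (k+1) * n

lemma cc_nonneg (a s : ℝ) (ha : 0 < a) (hs : 0 < s) : ∀ n k, 0 ≤ cc a s n k := by
  intro n
  induction n with
  | zero => intro k; cases k with
    | zero => simpa [cc] using (Real.rpow_pos_of_pos ha s).le
    | succ k => simp [cc]
  | succ n ih => intro k; cases k with
    | zero => exact mul_nonneg (ih 0) (Nat.cast_nonneg n)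
    | succ k =>
      refine add_nonneg (mul_nonneg (ih k) ?_) (mul_nonneg (ih (k+1)) (Nat.cast_nonneg n))
      positivity

lemma cc_eq_zero (a s : ℝ) : ∀ n k, n < k → cc a s n k = 0 := by
  intro n
  induction n with
  | zero => intro k hk; match k, hk with
    | k+1, _ => simp [cc]
  | succ n ih => intro k hk; match k, hk with
    | k+1, hk =>
      have h1 : n < k := by omega
      have h2 : n < k + 1 := by omega
      simp [cc, ih k h1, ih (k+1) h2]

lemma cc_sum (a s : ℝ) (n : ℕ) (T : ℕ → ℝ) :
    ∑ k ∈ range (n+1+1), cc a s (n+1) k * T k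
    = ∑ k ∈ range (n+1), (cc a s n k * n * T k + cc a s n k * (s+k) * T (k+1)) := by
  rw [Finset.sum_range_succ' (fun k => cc a s (n+1) k * T k) (n+1)]
  simp only [cc]
  rw [Finset.sum_add_distrib]
  have h1 : ∑ k ∈ range (n+1), cc a s n k * (n:ℝ) * T k
      = ∑ k ∈ range n, cc a s n (k+1) * (n:ℝ) * T (k+1) + cc a s n 0 * (n:ℝ) * T 0 :=
    Finset.sum_range_succ' (fun k => cc a s n k * (n:ℝ) * T k) n
  have h2 : ∑ k ∈ range (n+1), cc a s n (k+1) * (n:ℝ) * T (k+1)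
      = ∑ k ∈ range n, cc a s n (k+1) * (n:ℝ) * T (k+1) := by
    rw [Finset.sum_range_succ, cc_eq_zero a s n (n+1) (by omega)]
    simp
  have h3 : ∑ x ∈ range (n+1), (cc a s n x * (s + (x:ℝ)) + cc a s n (x + 1) * (n:ℝ)) * T (x + 1)
      = ∑ x ∈ range (n+1), cc a s n x * (s + (x:ℝ)) * T (x + 1)
        + ∑ x ∈ range (n+1), cc a s n (x+1) * (n:ℝ) * T (x + 1) := by
    rw [← Finset.sum_add_distrib]
    exact Finset.sum_congr rfl fun k _ => by ring
  rw [h1, h3, h2]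
  ring

noncomputable def FF (a s : ℝ) (n : ℕ) (x : ℝ) : ℝ :=
  (-1)^n * ((x+1) ^ (-(n:ℝ)) *
    ∑ k ∈ range (n+1), cc a s n k * (Real.log (x+1) + a) ^ (-(s + k)))

lemma FF_hasDerivAt (a s : ℝ) (ha : 0 < a) (n : ℕ) (x : ℝ) (hx : 0 < x) :
    HasDerivAt (FF a s n) (FF a s (n+1) x) x := by
  have hx1 : (0:ℝ) < x + 1 := by linarith
  set t : ℝ := Real.log (x+1) + a with htdef
  have ht : 0 < t := by
    have : 0 ≤ Real.log (x+1) := Real.log_nonneg (by linarith)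
    positivity
  have hid : HasDerivAt (fun y : ℝ => y + 1) 1 x := (hasDerivAt_id x).add_const 1
  have hlog : HasDerivAt (fun y : ℝ => Real.log (y+1) + a) ((x+1)⁻¹) x := by
    have := (Real.hasDerivAt_log hx1.ne').comp x hid
    simpa using this.add_const a
  have hk : ∀ k : ℕ, HasDerivAt (fun y : ℝ => cc a s n k * (Real.log (y+1) + a) ^ (-(s+k)))
      (cc a s n k * ((x+1)⁻¹ * (-(s+k)) * t ^ (-(s+k) - 1))) x := fun k =>
    (hlog.rpow_const (Or.inl ht.ne')).const_mul _
  have hS : HasDerivAt (fun y : ℝ => ∑ k ∈ range (n+1), cc a s n k * (Real.log (y+1) + a) ^ (-(s+k)))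
      (∑ k ∈ range (n+1), cc a s n k * ((x+1)⁻¹ * (-(s+k)) * t ^ (-(s+k) - 1))) x :=
    HasDerivAt.fun_sum (fun k _ => hk k)
  have hP : HasDerivAt (fun y : ℝ => (y+1) ^ (-(n:ℝ)))
      (1 * (-(n:ℝ)) * (x+1) ^ (-(n:ℝ) - 1)) x := hid.rpow_const (Or.inl hx1.ne')
  have hmain := ((hP.mul hS).const_mul ((-1:ℝ)^n))
  convert hmain using 1
  case e'_4 => rfl
  case e'_5 => rfl
  case e'_8 => rfl
  -- value equality
  have hX1 : (x+1) ^ (-(n:ℝ) - 1) = (x+1) ^ (-(((n:ℕ)+1:ℕ)):ℝ) := by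
    congr 1; push_cast; ring
  have hX2 : (x+1) ^ (-(n:ℝ)) * (x+1)⁻¹ = (x+1) ^ (-(((n:ℕ)+1:ℕ)):ℝ) := by
    rw [← Real.rpow_neg_one (x+1), ← Real.rpow_add hx1]
    congr 1; push_cast; ring
  have hT : ∀ k : ℕ, t ^ (-(s+(k:ℝ)) - 1) = t ^ (-(s + ((k+1:ℕ):ℝ))) := by
    intro k; congr 1; push_cast; ring
  rw [FF, cc_sum a s n (fun k => t ^ (-(s + (k:ℝ))))]
  have e1 : ∑ k ∈ range (n+1), cc a s n k * ((x+1)⁻¹ * (-(s+(k:ℝ))) * t ^ (-(s+(k:ℝ)) - 1))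
      = (x+1)⁻¹ * ∑ k ∈ range (n+1), cc a s n k * (-(s+(k:ℝ))) * t ^ (-(s + ((k+1:ℕ):ℝ))) := by
    rw [Finset.mul_sum]
    exact Finset.sum_congr rfl fun k _ => by rw [hT k]; ring
  have e2 : ∑ k ∈ range (n+1), cc a s n k * (n:ℝ) * t ^ (-(s + (k:ℝ)))
      = (n:ℝ) * ∑ k ∈ range (n+1), cc a s n k * t ^ (-(s + (k:ℝ))) := by
    rw [Finset.mul_sum]
    exact Finset.sum_congr rfl fun k _ => by ring
  have e3 : ∑ k ∈ range (n+1), cc a s n k * (-(s+(k:ℝ))) * t ^ (-(s + ((k+1:ℕ):ℝ)))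
      = -∑ k ∈ range (n+1), cc a s n k * (s+(k:ℝ)) * t ^ (-(s + ((k+1:ℕ):ℝ))) := by
    rw [← Finset.sum_neg_distrib]
    exact Finset.sum_congr rfl fun k _ => by ring
  rw [hX1, e1, e3, Finset.sum_add_distrib, e2]
  rw [show ((x+1) ^ (-(n:ℝ)) * ((x+1)⁻¹ * -∑ k ∈ range (n+1), cc a s n k * (s+(k:ℝ)) * t ^ (-(s + ((k+1:ℕ):ℝ)))))
      = ((x+1) ^ (-(n:ℝ)) * (x+1)⁻¹) * -∑ k ∈ range (n+1), cc a s n k * (s+(k:ℝ)) * t ^ (-(s + ((k+1:ℕ):ℝ))) from by ring, hX2]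
  ring

lemma iterated_eq (a s : ℝ) (ha : 0 < a) (f : ℝ → ℝ)
    (hf : ∀ x, f x = a ^ s * (Real.log (x + 1) + a) ^ (-s)) :
    ∀ n, ∀ x ∈ Set.Ioi (0:ℝ), iteratedDeriv n f x = FF a s n x := by
  intro n
  induction n with
  | zero =>
    intro x hx
    simp only [iteratedDeriv_zero, hf, FF, cc]
    norm_num
    exact Or.inl (by simp [cc])
  | succ n ih =>
    intro x hx
    rw [iteratedDeriv_succ]
    have hev : iteratedDeriv n f =ᶠ[nhds x] FF a s n :=
      Filter.eventuallyEq_of_mem (isOpen_Ioi.mem_nhds hx) ih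
    rw [hev.deriv_eq, (FF_hasDerivAt a s ha n x hx).deriv]


/-- For `a, s > 0`, the function `f(x) = aˢ (log(x+1) + a)^(−s)` is completely monotonic
on `[0,∞)`: it is continuous on `[0,∞)`, infinitely differentiable on `(0,∞)`, and
`(−1)ⁿ f⁽ⁿ⁾(x) ≥ 0` for all `n ∈ ℕ` and `x > 0`. -/
theorem subPowerLaw_completely_monotonic (a s : ℝ) (ha : 0 < a) (hs : 0 < s)
    (f : ℝ → ℝ) (hf : ∀ x, f x = a ^ s * (Real.log (x + 1) + a) ^ (-s)) :
    ContinuousOn f (Set.Ici 0) ∧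
    ContDiffOn ℝ (⊤ : ℕ∞) f (Set.Ioi 0) ∧
    ∀ n : ℕ, ∀ x : ℝ, 0 < x → 0 ≤ (-1 : ℝ) ^ n * iteratedDeriv n f x := by
  have hfe : f = fun x => a ^ s * (Real.log (x + 1) + a) ^ (-s) := funext hf
  have ht : ∀ x : ℝ, x ∈ Set.Ici (0:ℝ) → 0 < Real.log (x+1) + a := by
    intro x hx
    have h1 : (0:ℝ) ≤ Real.log (x+1) := Real.log_nonneg (by simp at hx; linarith)
    linarith
  refine ⟨?_, ?_, ?_⟩
  · rw [hfe]
    refine continuousOn_const.mul (ContinuousOn.rpow_const ?_ fun x hx => Or.inl (ht x hx).ne')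
    exact ((continuousOn_id.add continuousOn_const).log
      fun x hx => by simp at hx; show x + 1 ≠ 0; exact ne_of_gt (by linarith)).add continuousOn_const
  · rw [hfe]
    intro x hx
    have hx1 : x + (1:ℝ) ≠ 0 := by simp at hx; positivity
    have h1 : ContDiffAt ℝ (⊤ : ℕ∞) (fun y : ℝ => Real.log (y+1) + a) x :=
      (((contDiff_id.add contDiff_const).contDiffAt).log hx1).add contDiffAt_const
    have h2 : ContDiffAt ℝ (⊤ : ℕ∞) (fun y : ℝ => a ^ s * (Real.log (y+1) + a) ^ (-s)) x :=
      contDiffAt_const.mul (h1.rpow_const_of_ne (ht x (Set.mem_Ici.2 (le_of_lt hx))).ne')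
    exact h2.contDiffWithinAt
  · intro n x hx
    rw [iterated_eq a s ha f hf n x hx, FF, ← mul_assoc, ← mul_pow]
    norm_num
    have hx1 : (0:ℝ) < x + 1 := by linarith
    have htx : (0:ℝ) ≤ Real.log (x+1) + a := (ht x (le_of_lt hx)).le
    refine mul_nonneg (inv_nonneg.2 (pow_nonneg hx1.le _)) (Finset.sum_nonneg fun k _ =>
      mul_nonneg (cc_nonneg a s ha hs n k) (Real.rpow_nonneg htx _))
end
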